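/- For all t ∈ [π/3, π/2], the function Z̃(2, t) := log(φ)·(320cos(t)² − 140)/(16cos(t)² − 25)² − log(7/3)·√5·(4cos(t)² − 3)/(4cos(t)² − 5)² satisfies Z̃(2, t) ≥ Z̃(2, π/2) > 0.11. -/

import Mathlib

open Real

noncomputable def phi : ℝ := (1 + Real.sqrt 5) / 2

noncomputable def Ztilde2 (t : ℝ) : ℝ :=
  Real.log phi * (320 * Real.cos t ^ 2 - 140) / (16 * Real.cos t ^ 2 - 25) ^ 2 -
    Real.log (7 / 3) * Real.sqrt 5 * (4 * Real.cos t ^ 2 - 3) /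
      (4 * Real.cos t ^ 2 - 5) ^ 2

/-!
Writing `u = cos t ^ 2 ∈ [0, 1/4]`, `Z̃(2, t) = log φ · f u - √5 log (7/3) · g u` with
`f u = (320u - 140)/(16u - 25)²` and `g u = (4u - 3)/(4u - 5)²`. Clearing denominators,
`f u - f 0 = u (35840u + 88000) / (625 (16u - 25)²) ≥ 0` and
`g 0 - g u = u (20 - 48u) / (25 (4u - 5)²) ≥ 0` for `0 ≤ u ≤ 5/12`, so the minimum is at
`u = 0`, i.e. `t = π/2`, where `Z̃ = (3√5 log (7/3))/25 - (28 log φ)/125 ≈ 0.1196`.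
The numerical bound needs `log φ < 0.492` and `log (7/3) > 0.83`, both obtained by comparing
`exp x` with `(1 + x/n)^n`.
-/

lemma cos_sq_le_one_fourth {t : ℝ} (ht : t ∈ Set.Icc (π / 3) (2 * π / 3)) :
    cos t ^ 2 ≤ 1 / 4 := by
  obtain ⟨hlo, hhi⟩ := ht
  have hle : cos t ≤ 1 / 2 := by
    rw [← cos_pi_div_three]
    exact cos_le_cos_of_nonneg_of_le_pi (by positivity) (by linarith [pi_pos]) hlo
  have hge : -(1 / 2) ≤ cos t := by
    rw [← cos_pi_div_three, ← cos_pi_sub]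
    exact cos_le_cos_of_nonneg_of_le_pi (by linarith [pi_pos]) (by linarith [pi_pos])
      (by linarith)
  nlinarith

lemma neg_140_div_625_le_div {u : ℝ} (hu : 0 ≤ u) :
    -140 / 625 ≤ (320 * u - 140) / (16 * u - 25) ^ 2 := by
  by_cases h : 16 * u - 25 = 0
  · rw [h]
    norm_num
  rw [div_le_div_iff₀ (by norm_num) (by positivity)]
  nlinarith

lemma div_le_neg_3_div_25 {u : ℝ} (hu₀ : 0 ≤ u) (hu₁ : u ≤ 5 / 12) :
    (4 * u - 3) / (4 * u - 5) ^ 2 ≤ -3 / 25 := by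
  rw [div_le_div_iff₀ (by nlinarith) (by norm_num)]
  nlinarith

lemma Ztilde2_eq (t : ℝ) :
    Ztilde2 t = log phi * ((320 * cos t ^ 2 - 140) / (16 * cos t ^ 2 - 25) ^ 2) -
      log (7 / 3) * √5 * ((4 * cos t ^ 2 - 3) / (4 * cos t ^ 2 - 5) ^ 2) := by
  simp only [Ztilde2, mul_div_assoc]

lemma Ztilde2_pi_div_two :
    Ztilde2 (π / 2) = log phi * (-140 / 625) - log (7 / 3) * √5 * (-3 / 25) := by
  rw [Ztilde2_eq, cos_pi_div_two]
  norm_num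

lemma Ztilde2_pi_div_two_le {t : ℝ} (hu : cos t ^ 2 ≤ 5 / 12) :
    Ztilde2 (π / 2) ≤ Ztilde2 t := by
  have hphi : 0 ≤ log phi := log_nonneg one_lt_goldenRatio.le
  have h73 : 0 ≤ log (7 / 3) * √5 := mul_nonneg (log_nonneg (by norm_num)) (sqrt_nonneg 5)
  rw [Ztilde2_pi_div_two, Ztilde2_eq]
  exact sub_le_sub (mul_le_mul_of_nonneg_left (neg_140_div_625_le_div (sq_nonneg _)) hphi)
    (mul_le_mul_of_nonneg_left (div_le_neg_3_div_25 (sq_nonneg _) hu) h73)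

lemma one_add_div_pow_le_exp {x : ℝ} {n : ℕ} (hx : -x ≤ n) : (1 + x / n) ^ n ≤ exp x := by
  simpa [sub_eq_add_neg, neg_div] using one_sub_div_pow_le_exp_neg hx

lemma log_phi_lt : log phi < 0.492 := by
  have hsqrt : √5 < 2.24 := (sqrt_lt' (by norm_num)).2 (by norm_num)
  have hpos : 0 < phi := zero_lt_one.trans one_lt_goldenRatio
  rw [log_lt_iff_lt_exp hpos]
  calc phi < (1 + 0.492 / (16 : ℕ)) ^ 16 := by rw [phi]; norm_num; linarith
    _ ≤ exp 0.492 := one_add_div_pow_le_exp (by norm_num)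

lemma lt_log_seven_div_three : 0.83 < log (7 / 3) := by
  rw [lt_log_iff_exp_lt (by norm_num)]
  have hpow : ((1 : ℝ) - 0.83 / (32 : ℕ)) ^ 32 ≤ exp (-0.83) :=
    one_sub_div_pow_le_exp_neg (by norm_num)
  calc exp 0.83 = (exp (-0.83))⁻¹ := by rw [exp_neg, inv_inv]
    _ ≤ (((1 : ℝ) - 0.83 / (32 : ℕ)) ^ 32)⁻¹ := inv_anti₀ (by norm_num) hpow
    _ < 7 / 3 := by norm_num

lemma lt_Ztilde2_pi_div_two : 0.11 < Ztilde2 (π / 2) := by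
  have hsqrt : 2.236 < √5 := (lt_sqrt (by norm_num)).2 (by norm_num)
  have hphi := log_phi_lt
  have h73 := lt_log_seven_div_three
  rw [Ztilde2_pi_div_two]
  nlinarith

theorem Ztilde2_bound (t : ℝ) (ht : t ∈ Set.Icc (π / 3) (π / 2)) :
    Ztilde2 t ≥ Ztilde2 (π / 2) ∧ Ztilde2 (π / 2) > 0.11 := by
  have hu : cos t ^ 2 ≤ 1 / 4 :=
    cos_sq_le_one_fourth (Set.Icc_subset_Icc_right (by linarith [pi_pos]) ht)
  exact ⟨Ztilde2_pi_div_two_le (by linarith), lt_Ztilde2_pi_div_two⟩
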